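/- arXiv:2010.14928 — 2 statements merged into one kernel-verified Lean document; each statement's English description precedes it below -/
import Mathlib

section
/- Let E and F be finite-dimensional real inner product spaces, n a positive integer, K : (Fin n → E) → F a descriptor, and φ̄ : Fin n → E a fixed observation, with energy E_φ̄(μ) = (1/2)‖K(μ) − K(φ̄)‖². Assume that for every configuration μ : Fin n → E and every index i, the map y ↦ K(Function.update μ i (μ i + y)) is differentiable, and let G(μ) := fun i => μ i − γ • ∇_i E_φ̄(μ) be the particle gradient-descent step for a fixed step size γ > 0; assume G is Borel measurable. Let T : E → E, T x = A x + b be a rigid transformation with A a linear isometry equivalence of E and b ∈ E, and assume K is T-invariant, i.e. K(T ∘ μ) = K(μ) for all μ. If P is a Borel probability measure on Fin n → E that is invariant under the map μ ↦ T ∘ μ (i.e. the pushforward of P by this map equals P), then for every k ∈ ℕ the pushforward of P by the k-fold iterate G^[k] is also invariant under μ ↦ T ∘ μ. -/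
/-!
The energy inherits the invariance of `K`. Since `T` is affine with linear part `A`, moving
particle `i` of `T ∘ μ` by `y` is the image under `T` of moving particle `i` of `μ` by `A⁻¹ y`;
hence every particle gradient at `T ∘ μ` is `A` applied to the one at `μ`, and the descent step
commutes with `μ ↦ T ∘ μ`. A pushforward by a map commuting with `μ ↦ T ∘ μ` preserves
invariance under it.
-/

open MeasureTheory Function

theorem gradient_comp_linearIsometryEquiv {E : Type*} [NormedAddCommGroup E]
    [InnerProductSpace ℝ E] [CompleteSpace E] (f : E → ℝ) (A : E ≃ₗᵢ[ℝ] E) (x : E) :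
    gradient (f ∘ A) x = A.symm (gradient f (A x)) := by
  apply (InnerProductSpace.toDual ℝ E).injective
  ext y
  rw [InnerProductSpace.toDual_apply_apply, InnerProductSpace.toDual_apply_apply,
    ← A.inner_map_map (A.symm _), A.apply_symm_apply, gradient, gradient,
    InnerProductSpace.toDual_symm_apply, InnerProductSpace.toDual_symm_apply]
  exact congrArg (· y) ((A : E ≃L[ℝ] E).comp_right_fderiv (f := f) (x := x))

section ParticleGradient

variable {ι E : Type*} [DecidableEq ι] [NormedAddCommGroup E] [InnerProductSpace ℝ E]
  [CompleteSpace E]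

noncomputable def particleGradient (Φ : (ι → E) → ℝ) (μ : ι → E) (i : ι) : E :=
  gradient (fun y => Φ (update μ i (μ i + y))) 0

noncomputable def gradientStep (Φ : (ι → E) → ℝ) (γ : ℝ) (μ : ι → E) : ι → E :=
  fun i => μ i - γ • particleGradient Φ μ i

variable {Φ : (ι → E) → ℝ} {A : E ≃ₗᵢ[ℝ] E} {b : E} {T : E → E}

theorem particleGradient_comp (hT : ∀ x, T x = A x + b) (hΦ : ∀ μ, Φ (T ∘ μ) = Φ μ)
    (μ : ι → E) (i : ι) : particleGradient Φ (T ∘ μ) i = A (particleGradient Φ μ i) := by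
  have hshift : (fun y => Φ (update (T ∘ μ) i ((T ∘ μ) i + y))) =
      (fun y => Φ (update μ i (μ i + y))) ∘ A.symm := by
    funext y
    have hTy : T (μ i + A.symm y) = T (μ i) + y := by
      rw [hT, hT, map_add, A.apply_symm_apply, add_right_comm]
    rw [comp_apply, comp_apply, ← hΦ (update μ i _), comp_update, hTy]
  rw [particleGradient, hshift, gradient_comp_linearIsometryEquiv, A.symm_symm, map_zero]
  rfl

theorem commute_gradientStep (hT : ∀ x, T x = A x + b) (hΦ : ∀ μ, Φ (T ∘ μ) = Φ μ) (γ : ℝ) :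
    Function.Commute (gradientStep Φ γ) (fun μ : ι → E => T ∘ μ) := fun μ => by
  funext i
  simp only [gradientStep, particleGradient_comp hT hΦ, comp_apply, hT, map_sub, map_smul]
  abel

end ParticleGradient

theorem MeasureTheory.Measure.map_map_of_commute {α : Type*} [MeasurableSpace α]
    {f g : α → α} {P : Measure α} (hf : Measurable f) (hg : Measurable g)
    (hfg : Function.Commute f g) (hP : P.map f = P) : (P.map g).map f = P.map g := by
  rw [Measure.map_map hf hg, hfg.comp_eq, ← Measure.map_map hg hf, hP]

theorem particle_gradient_descent_invariance_general
    {E F : Type*}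
    [NormedAddCommGroup E] [InnerProductSpace ℝ E] [FiniteDimensional ℝ E]
    [MeasurableSpace E] [BorelSpace E]
    [NormedAddCommGroup F] [InnerProductSpace ℝ F]
    {n : ℕ}
    (K : (Fin n → E) → F) (φ : Fin n → E)
    (Energy : (Fin n → E) → ℝ)
    (hEnergy : ∀ μ, Energy μ = (1 / 2 : ℝ) * ‖K μ - K φ‖ ^ 2)
    (γ : ℝ)
    (G : (Fin n → E) → (Fin n → E))
    (hG : ∀ (μ : Fin n → E) (i : Fin n),
      G μ i = μ i - γ • gradient (fun y : E => Energy (Function.update μ i (μ i + y))) 0)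
    (hGmeas : Measurable G)
    (A : E ≃ₗᵢ[ℝ] E) (b : E) (T : E → E) (hT : ∀ x, T x = A x + b)
    (hKinv : ∀ μ : Fin n → E, K (T ∘ μ) = K μ)
    (P : Measure (Fin n → E))
    (hPinv : Measure.map (fun μ : Fin n → E => T ∘ μ) P = P)
    (k : ℕ) :
    Measure.map (fun μ : Fin n → E => T ∘ μ) (Measure.map (G^[k]) P)
      = Measure.map (G^[k]) P := by
  obtain rfl : G = gradientStep Energy γ := funext fun μ => funext (hG μ)
  have hEnergy_inv : ∀ μ, Energy (T ∘ μ) = Energy μ := fun μ => by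
    rw [hEnergy, hEnergy, hKinv]
  have hT_cont : Continuous T := by
    rw [funext hT]
    fun_prop
  have hT_meas : Measurable fun μ : Fin n → E => T ∘ μ :=
    measurable_pi_lambda _ fun i => hT_cont.measurable.comp (measurable_pi_apply i)
  exact Measure.map_map_of_commute hT_meas (hGmeas.iterate k)
    ((commute_gradientStep hT hEnergy_inv γ).iterate_left k).symm hPinv

/-- **Theorem 1 of the paper (labelled-tuple version).**
If the descriptor `K` is invariant under the rigid transformation `T x = A x + b`,
and the law `P` of the initial configuration is invariant under `μ ↦ T ∘ μ`, then the law
of the configuration after `k` particle gradient-descent steps is also invariant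
under `μ ↦ T ∘ μ`. -/
theorem particle_gradient_descent_invariance
    {E F : Type*}
    [NormedAddCommGroup E] [InnerProductSpace ℝ E] [FiniteDimensional ℝ E]
    [MeasurableSpace E] [BorelSpace E]
    [NormedAddCommGroup F] [InnerProductSpace ℝ F] [FiniteDimensional ℝ F]
    {n : ℕ} (hn : 0 < n)
    (K : (Fin n → E) → F) (φ : Fin n → E)
    (Energy : (Fin n → E) → ℝ)
    (hEnergy : ∀ μ, Energy μ = (1 / 2 : ℝ) * ‖K μ - K φ‖ ^ 2)
    (hKdiff : ∀ (μ : Fin n → E) (i : Fin n),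
      Differentiable ℝ (fun y : E => K (Function.update μ i (μ i + y))))
    (γ : ℝ) (hγ : 0 < γ)
    (G : (Fin n → E) → (Fin n → E))
    (hG : ∀ (μ : Fin n → E) (i : Fin n),
      G μ i = μ i - γ • gradient (fun y : E => Energy (Function.update μ i (μ i + y))) 0)
    (hGmeas : Measurable G)
    (A : E ≃ₗᵢ[ℝ] E) (b : E) (T : E → E) (hT : ∀ x, T x = A x + b)
    (hKinv : ∀ μ : Fin n → E, K (T ∘ μ) = K μ)
    (P : Measure (Fin n → E)) [IsProbabilityMeasure P]
    (hPinv : Measure.map (fun μ : Fin n → E => T ∘ μ) P = P)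
    (k : ℕ) :
    Measure.map (fun μ : Fin n → E => T ∘ μ) (Measure.map (G^[k]) P)
      = Measure.map (G^[k]) P :=
  particle_gradient_descent_invariance_general K φ Energy hEnergy γ G hG hGmeas A b T hT hKinv P
    hPinv k
end

section
/- Let E and F be finite-dimensional real inner product spaces, n a positive integer, K : (Fin n → E) → F a descriptor, φ̄ : Fin n → E a fixed observation, and energy E_φ̄(μ) = (1/2)‖K(μ) − K(φ̄)‖². Assume that for every configuration μ and every index i, the map y ↦ K(Function.update μ i (μ i + y)) is differentiable, and let G(μ) := fun i => μ i − γ • ∇_i E_φ̄(μ) for a fixed step size γ > 0. Let T : E → E, T x = A x + b be a rigid transformation with A a linear isometry equivalence of E and b ∈ E, and assume K is T-invariant. Then the gradient-descent step is T-equivariant: for every configuration μ, G(T ∘ μ) = T ∘ G(μ). -/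
/-!
Write `T x = A x + b`. Moving particle `i` of `T ∘ μ` by `y` is the same as applying `T` to `μ`
with particle `i` moved by `A⁻¹ y`, so by invariance of `K` the partial energy at `T ∘ μ` is the
partial energy at `μ` precomposed with the isometry `A⁻¹`. Gradients transform under isometries
by `A` (also where `f` is not differentiable: then both gradients are `0`), and
`T (x - γ • g) = T x - γ • A g`.
-/

open Function InnerProductSpace

theorem LinearIsometryEquiv.gradient_comp
    {E : Type*} [NormedAddCommGroup E] [InnerProductSpace ℝ E] [CompleteSpace E]
    (A : E ≃ₗᵢ[ℝ] E) (f : E → ℝ) (x : E) :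
    gradient (f ∘ A) x = A.symm (gradient f (A x)) := by
  have hchain := A.toContinuousLinearEquiv.comp_right_fderiv (f := f) (x := x)
  refine ext_inner_right ℝ fun v => ?_
  rw [inner_gradient_left, ← A.inner_map_map, A.apply_symm_apply, inner_gradient_left]
  exact congrArg (· v) hchain

theorem Function.update_comp_add_of_map_add {ι E : Type*} [DecidableEq ι] [Add E]
    {T A : E → E} (hT : ∀ x y, T (x + y) = T x + A y) (μ : ι → E) (i : ι) (y : E) :
    update (T ∘ μ) i ((T ∘ μ) i + A y) = T ∘ update μ i (μ i + y) := by
  rw [comp_update, comp_apply, hT]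

theorem particle_gradient_descent_step_equivariant_general
    {E F : Type*}
    [NormedAddCommGroup E] [InnerProductSpace ℝ E] [FiniteDimensional ℝ E]
    [NormedAddCommGroup F] [InnerProductSpace ℝ F]
    {n : ℕ}
    (K : (Fin n → E) → F) (φ : Fin n → E)
    (Energy : (Fin n → E) → ℝ)
    (hEnergy : ∀ μ, Energy μ = (1 / 2 : ℝ) * ‖K μ - K φ‖ ^ 2)
    (γ : ℝ)
    (G : (Fin n → E) → (Fin n → E))
    (hG : ∀ (μ : Fin n → E) (i : Fin n),
      G μ i = μ i - γ • gradient (fun y : E => Energy (Function.update μ i (μ i + y))) 0)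
    (A : E ≃ₗᵢ[ℝ] E) (b : E) (T : E → E) (hT : ∀ x, T x = A x + b)
    (hKinv : ∀ μ : Fin n → E, K (T ∘ μ) = K μ) :
    ∀ μ : Fin n → E, G (T ∘ μ) = T ∘ G μ := by
  intro μ
  funext i
  have hT_add : ∀ x y, T (x + y) = T x + A y := fun x y => by
    rw [hT, hT, map_add, add_right_comm]
  have hEnergy_inv : ∀ ν, Energy (T ∘ ν) = Energy ν := fun ν => by
    rw [hEnergy, hEnergy, hKinv]
  set f : E → ℝ := fun y => Energy (update μ i (μ i + y))
  have hpullback : (fun y => Energy (update (T ∘ μ) i ((T ∘ μ) i + y))) = f ∘ A.symm := by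
    funext y
    calc Energy (update (T ∘ μ) i ((T ∘ μ) i + y))
        = Energy (T ∘ update μ i (μ i + A.symm y)) := by
          rw [← update_comp_add_of_map_add hT_add, A.apply_symm_apply]
      _ = f (A.symm y) := hEnergy_inv _
  have hgrad : gradient (fun y => Energy (update (T ∘ μ) i ((T ∘ μ) i + y))) 0
      = A (gradient f 0) := by
    rw [hpullback, A.symm.gradient_comp, map_zero, A.symm_symm]
  rw [hG, hgrad, comp_apply, comp_apply, hG, hT, hT, map_sub, map_smul]
  abel

/-- **Equivariance of the particle gradient-descent step** (key identity in the proof of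
Theorem 1 of the paper): if the descriptor `K` is invariant under the rigid transformation
`T x = A x + b`, then `G (T ∘ μ) = T ∘ G μ`. -/
theorem particle_gradient_descent_step_equivariant
    {E F : Type*}
    [NormedAddCommGroup E] [InnerProductSpace ℝ E] [FiniteDimensional ℝ E]
    [NormedAddCommGroup F] [InnerProductSpace ℝ F] [FiniteDimensional ℝ F]
    {n : ℕ} (hn : 0 < n)
    (K : (Fin n → E) → F) (φ : Fin n → E)
    (Energy : (Fin n → E) → ℝ)
    (hEnergy : ∀ μ, Energy μ = (1 / 2 : ℝ) * ‖K μ - K φ‖ ^ 2)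
    (hKdiff : ∀ (μ : Fin n → E) (i : Fin n),
      Differentiable ℝ (fun y : E => K (Function.update μ i (μ i + y))))
    (γ : ℝ) (hγ : 0 < γ)
    (G : (Fin n → E) → (Fin n → E))
    (hG : ∀ (μ : Fin n → E) (i : Fin n),
      G μ i = μ i - γ • gradient (fun y : E => Energy (Function.update μ i (μ i + y))) 0)
    (A : E ≃ₗᵢ[ℝ] E) (b : E) (T : E → E) (hT : ∀ x, T x = A x + b)
    (hKinv : ∀ μ : Fin n → E, K (T ∘ μ) = K μ) :
    ∀ μ : Fin n → E, G (T ∘ μ) = T ∘ G μ :=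
  particle_gradient_descent_step_equivariant_general K φ Energy hEnergy γ G hG A b T hT hKinv
end
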